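/- For every even integer n ≥ 4 there is an instance of binary Seat Arrangement whose price of fairness is at least the average degree of the seat graph minus 1/4. Concretely, let the agents be P = P_K ⊔ P_C with |P_K| = |P_C| = n and fix a cyclic order c_1, …, c_n of P_C; let f_p(q) = 1 for all distinct p, q ∈ P_K, f_{c_i}(c_{i+1}) = 1 for every i (indices modulo n), and all other preferences be 0; and let the seat graph G be the disjoint union of a clique K_n and n/2 disjoint edges, so its average degree is d̃(G) = n/2. Then every maximin arrangement π_f satisfies sw(π_f) = 2n, the maximum social welfare equals n(n − 1/2), and hence max_π sw(π) ≥ (d̃(G) − 1/4) · sw(π_f) for every maximin arrangement π_f. -/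
import Mathlib


open scoped Classical

noncomputable section

namespace SeatArrangement

variable {P V : Type*}

/-- The utility of agent `p` under arrangement `π`:
the sum, over the seat-graph neighbors `v` of `π p`, of `p`'s preference for the agent seated
at `v`. -/
def utility [Fintype V] (G : SimpleGraph V) (f : P → P → ℝ) (π : P ≃ V) (p : P) : ℝ :=
  ∑ v : V, if G.Adj (π p) v then f p (π.symm v) else 0

/-- The social welfare of an arrangement: the sum of the utilities of all agents. -/
def sw [Fintype P] [Fintype V] (G : SimpleGraph V) (f : P → P → ℝ) (π : P ≃ V) : ℝ :=
  ∑ p : P, utility G f π p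

/-- The `(p,q)`-swap arrangement of `π`. -/
def swapArr (π : P ≃ V) (p q : P) : P ≃ V := (Equiv.swap p q).trans π

/-- `{p, q}` is a blocking pair for `π`: both agents strictly improve by swapping seats. -/
def blocking [Fintype V] (G : SimpleGraph V) (f : P → P → ℝ) (π : P ≃ V) (p q : P) : Prop :=
  p ≠ q ∧ utility G f π p < utility G f (swapArr π p q) p
        ∧ utility G f π q < utility G f (swapArr π p q) q

/-- An arrangement is stable if it has no blocking pair. -/
def stable [Fintype V] (G : SimpleGraph V) (f : P → P → ℝ) (π : P ≃ V) : Prop :=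
  ∀ p q : P, ¬ blocking G f π p q

/-- An arrangement is envy-free if no agent would strictly improve by taking
another agent's seat (via a swap). -/
def envyFree [Fintype V] (G : SimpleGraph V) (f : P → P → ℝ) (π : P ≃ V) : Prop :=
  ∀ p q : P, p ≠ q → utility G f (swapArr π p q) p ≤ utility G f π p

/-- The least utility of an agent under `π` (for a finite nonempty set of agents, the
infimum of the range of utilities is the minimum utility). -/
def minUtil [Fintype V] (G : SimpleGraph V) (f : P → P → ℝ) (π : P ≃ V) : ℝ :=
  sInf (Set.range (utility G f π))

/-- A maximin arrangement maximizes the least utility of an agent. -/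
def maximin [Fintype V] (G : SimpleGraph V) (f : P → P → ℝ) (πf : P ≃ V) : Prop :=
  ∀ π : P ≃ V, minUtil G f π ≤ minUtil G f πf

/-- A maximum arrangement maximizes the social welfare. -/
def maximum [Fintype P] [Fintype V] (G : SimpleGraph V) (f : P → P → ℝ) (πm : P ≃ V) : Prop :=
  ∀ π : P ≃ V, sw G f π ≤ sw G f πm

end SeatArrangement

open SeatArrangement

/-- Preferences for STATEMENT 6: the agents are `P_K ⊕ P_C` with `|P_K| = |P_C| = n`.
Each agent of `P_K` has preference 1 for every other agent of `P_K`; agent `c_i ∈ P_C`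
has preference 1 for `c_{i+1 mod n}`; all other preferences are 0. -/
def prefs6 (n : ℕ) : (Fin n ⊕ Fin n) → (Fin n ⊕ Fin n) → ℝ
  | .inl a, .inl b => if a ≠ b then 1 else 0
  | .inr a, .inr b => if b.val = (a.val + 1) % n then 1 else 0
  | _, _ => 0

/-- Seat graph for STATEMENT 6: the disjoint union of a clique `K_n` and `n/2` disjoint
edges (`n` even), pairing vertices `2k` and `2k+1`. -/
def seat6 (n : ℕ) : SimpleGraph (Fin n ⊕ Fin n) :=
  (⊤ : SimpleGraph (Fin n)) ⊕g
    SimpleGraph.fromRel (fun a b : Fin n => a.val / 2 = b.val / 2)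

namespace Pof6

/-- matching partner of seat `v` -/
def pt (v : ℕ) : ℕ := if v % 2 = 0 then v + 1 else v - 1

lemma pt_lt {n v : ℕ} (h : Even n) (hv : v < n) : pt v < n := by
  obtain ⟨m, rfl⟩ := h; unfold pt; split_ifs <;> omega

lemma pt_pt (v : ℕ) : pt (pt v) = v := by
  unfold pt; split_ifs <;> omega

lemma pt_ne (v : ℕ) : pt v ≠ v := by unfold pt; split_ifs <;> omega

lemma pt_iff {v w : ℕ} : (w ≠ v ∧ w / 2 = v / 2) ↔ w = pt v := by
  unfold pt; split_ifs <;> omega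

lemma mod_succ_ne {n : ℕ} (hn : 2 ≤ n) {a : ℕ} (ha : a < n) : (a + 1) % n ≠ a := by
  by_cases h : a + 1 = n
  · rw [h, Nat.mod_self]; omega
  · rw [Nat.mod_eq_of_lt (by omega)]; omega

lemma no_two_cycle {n : ℕ} (hn : 3 ≤ n) {c q : ℕ} (hc : c < n)
    (h1 : q = (c + 1) % n) (h2 : c = (q + 1) % n) : False := by
  by_cases h : c + 1 = n
  · rw [h, Nat.mod_self] at h1
    rw [h1] at h2
    rw [Nat.mod_eq_of_lt (by omega)] at h2
    omega
  · rw [Nat.mod_eq_of_lt (by omega)] at h1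
    by_cases h' : q + 1 = n
    · rw [h', Nat.mod_self] at h2; omega
    · rw [Nat.mod_eq_of_lt (by omega)] at h2; omega

end Pof6

open Pof6

section Lemmas

variable {n : ℕ}

lemma seat6_adj_ll (a b : Fin n) : (seat6 n).Adj (.inl a) (.inl b) ↔ a ≠ b := by
  simp [seat6, SimpleGraph.sum_adj]

lemma seat6_adj_lr (a b : Fin n) : ¬ (seat6 n).Adj (.inl a) (.inr b) := by
  simp [seat6, SimpleGraph.sum_adj]

lemma seat6_adj_rl (a b : Fin n) : ¬ (seat6 n).Adj (.inr a) (.inl b) := by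
  simp [seat6, SimpleGraph.sum_adj]

lemma seat6_adj_rr (a b : Fin n) :
    (seat6 n).Adj (.inr a) (.inr b) ↔ b.val = pt a.val := by
  rw [← pt_iff]
  simp only [seat6, SimpleGraph.sum_adj, SimpleGraph.fromRel_adj, ne_eq, Fin.ext_iff]
  omega

/-- preference of a cycle agent, as an indicator. -/
lemma prefs_c (c : Fin n) (q : Fin n ⊕ Fin n) (h : (c.val + 1) % n < n) :
    prefs6 n (.inr c) q = if q = .inr ⟨(c.val + 1) % n, h⟩ then 1 else 0 := by
  cases q with
  | inl b => simp [prefs6]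
  | inr b =>
    simp only [prefs6, Sum.inr.injEq, Fin.ext_iff]

/-- utility of the agent seated at matching seat `v`. -/
lemma utility_matching (π : (Fin n ⊕ Fin n) ≃ (Fin n ⊕ Fin n)) (p : Fin n ⊕ Fin n)
    (v : Fin n) (hp : π p = .inr v) (hlt : pt v.val < n) :
    utility (seat6 n) (prefs6 n) π p = prefs6 n p (π.symm (.inr ⟨pt v.val, hlt⟩)) := by
  rw [utility, hp, Fintype.sum_sum_type]
  rw [Finset.sum_congr rfl (fun w _ => if_neg (seat6_adj_rl v w))]
  simp only [Finset.sum_const_zero, zero_add]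
  have : ∀ w : Fin n, (if (seat6 n).Adj (.inr v) (.inr w) then prefs6 n p (π.symm (.inr w)) else 0)
      = if w = ⟨pt v.val, hlt⟩ then prefs6 n p (π.symm (.inr w)) else 0 := by
    intro w
    congr 1
    simp [seat6_adj_rr, Fin.ext_iff]
  rw [Finset.sum_congr rfl (fun w _ => this w)]
  simp

/-- utility of the agent seated at clique seat `a`. -/
lemma utility_clique (π : (Fin n ⊕ Fin n) ≃ (Fin n ⊕ Fin n)) (p : Fin n ⊕ Fin n)
    (a : Fin n) (hp : π p = .inl a) :
    utility (seat6 n) (prefs6 n) π p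
      = ∑ w : Fin n, if a ≠ w then prefs6 n p (π.symm (.inl w)) else 0 := by
  rw [utility, hp, Fintype.sum_sum_type]
  rw [Finset.sum_congr rfl (fun w _ => if_neg (seat6_adj_lr a w))]
  simp only [Finset.sum_const_zero, add_zero]
  exact Finset.sum_congr rfl fun w _ => if_congr (seat6_adj_ll a w) rfl rfl

end Lemmas

section Lemmas2

variable {n : ℕ}

lemma c_util_le_one (hn : 0 < n) (π : (Fin n ⊕ Fin n) ≃ (Fin n ⊕ Fin n)) (c : Fin n) :
    utility (seat6 n) (prefs6 n) π (.inr c) ≤ 1 := by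
  have h : (c.val + 1) % n < n := Nat.mod_lt _ hn
  have step : utility (seat6 n) (prefs6 n) π (.inr c)
      ≤ ∑ s : Fin n ⊕ Fin n, if π.symm s = .inr ⟨(c.val + 1) % n, h⟩ then (1:ℝ) else 0 := by
    rw [utility]
    apply Finset.sum_le_sum
    intro s _
    rw [prefs_c c _ h]
    split_ifs <;> norm_num
  refine le_trans step (le_of_eq ?_)
  have : ∀ s : Fin n ⊕ Fin n,
      (if π.symm s = .inr ⟨(c.val + 1) % n, h⟩ then (1:ℝ) else 0)
      = if s = π (.inr ⟨(c.val + 1) % n, h⟩) then (1:ℝ) else 0 := by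
    intro s
    exact if_congr (Equiv.symm_apply_eq π) rfl rfl
  rw [Finset.sum_congr rfl (fun s _ => this s)]
  simp

lemma util_one_sumComm (hn : 4 ≤ n) (heven : Even n) (p : Fin n ⊕ Fin n) :
    utility (seat6 n) (prefs6 n) (Equiv.sumComm (Fin n) (Fin n)) p = 1 := by
  cases p with
  | inl a =>
    rw [utility_matching _ (.inl a) a rfl (pt_lt heven a.isLt)]
    have : (Equiv.sumComm (Fin n) (Fin n)).symm (.inr ⟨pt a.val, pt_lt heven a.isLt⟩)
        = .inl ⟨pt a.val, pt_lt heven a.isLt⟩ := rfl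
    rw [this]
    simp only [prefs6]
    exact if_pos (Fin.ne_of_val_ne (Ne.symm (pt_ne a.val)))
  | inr a =>
    have hmod : (a.val + 1) % n < n := Nat.mod_lt _ (by omega)
    rw [utility_clique _ (.inr a) a rfl]
    have key : ∀ w : Fin n,
        (if a ≠ w then prefs6 n (.inr a) ((Equiv.sumComm (Fin n) (Fin n)).symm (.inl w)) else 0)
        = if w = ⟨(a.val + 1) % n, hmod⟩ then (1:ℝ) else 0 := by
      intro w
      have hsy : (Equiv.sumComm (Fin n) (Fin n)).symm (.inl w) = .inr w := rfl
      rw [hsy]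
      have hpref : prefs6 n (.inr a) (.inr w)
          = if w = ⟨(a.val + 1) % n, hmod⟩ then (1:ℝ) else 0 := by
        simp only [prefs6, Fin.ext_iff]
      rw [hpref]
      by_cases hw : w = ⟨(a.val + 1) % n, hmod⟩
      · rw [if_pos hw]
        exact if_pos (fun hne =>
          mod_succ_ne (show 2 ≤ n by omega) a.isLt (congrArg Fin.val (hne.trans hw)).symm)
      · rw [if_neg hw]
        exact ite_self 0
    rw [Finset.sum_congr rfl (fun w _ => key w)]
    simp

end Lemmas2

section Lemmas3

variable {n : ℕ}

lemma maximin_utils_ge_one (hn : 4 ≤ n) (heven : Even n)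
    (πf : (Fin n ⊕ Fin n) ≃ (Fin n ⊕ Fin n)) (hm : maximin (seat6 n) (prefs6 n) πf)
    (p : Fin n ⊕ Fin n) : 1 ≤ utility (seat6 n) (prefs6 n) πf p := by
  have hne : Nonempty (Fin n ⊕ Fin n) := ⟨.inl ⟨0, by omega⟩⟩
  have h0 : (1:ℝ) ≤ minUtil (seat6 n) (prefs6 n) (Equiv.sumComm (Fin n) (Fin n)) := by
    apply le_csInf (Set.range_nonempty _)
    rintro x ⟨q, rfl⟩
    rw [util_one_sumComm hn heven q]
  have h1 : minUtil (seat6 n) (prefs6 n) πf ≤ utility (seat6 n) (prefs6 n) πf p :=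
    csInf_le ((Set.finite_range _).bddBelow) ⟨p, rfl⟩
  linarith [hm (Equiv.sumComm (Fin n) (Fin n))]

lemma maximin_matching_K (hn : 4 ≤ n) (heven : Even n)
    (πf : (Fin n ⊕ Fin n) ≃ (Fin n ⊕ Fin n)) (hm : maximin (seat6 n) (prefs6 n) πf)
    (v : Fin n) : ∃ a : Fin n, πf.symm (.inr v) = .inl a := by
  cases h : πf.symm (.inr v) with
  | inl a => exact ⟨a, rfl⟩
  | inr c =>
    exfalso
    have hseat : πf (.inr c) = .inr v := by rw [← h, Equiv.apply_symm_apply]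
    have hlt : pt v.val < n := pt_lt heven v.isLt
    have hu := maximin_utils_ge_one hn heven πf hm (.inr c)
    rw [utility_matching πf _ v hseat hlt] at hu
    have hmod : (c.val + 1) % n < n := Nat.mod_lt _ (by omega)
    rw [prefs_c c _ hmod] at hu
    have hq2 : πf.symm (.inr ⟨pt v.val, hlt⟩) = .inr ⟨(c.val + 1) % n, hmod⟩ := by
      by_contra hcon
      rw [if_neg hcon] at hu
      linarith
    set c' : Fin n := ⟨(c.val + 1) % n, hmod⟩ with hc'
    have hseat' : πf (.inr c') = .inr ⟨pt v.val, hlt⟩ := by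
      rw [← hq2, Equiv.apply_symm_apply]
    have hlt2 : pt (pt v.val) < n := by rw [pt_pt]; exact v.isLt
    have hu' := maximin_utils_ge_one hn heven πf hm (.inr c')
    rw [utility_matching πf _ _ hseat' hlt2] at hu'
    have hvv : (⟨pt (pt v.val), hlt2⟩ : Fin n) = v := Fin.ext (pt_pt v.val)
    have hmod' : (c'.val + 1) % n < n := Nat.mod_lt _ (by omega)
    rw [hvv, h, prefs_c c' _ hmod'] at hu'
    have hc2 : (.inr c : Fin n ⊕ Fin n) = .inr (⟨(c'.val + 1) % n, hmod'⟩ : Fin n) := by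
      by_contra hcon
      rw [if_neg hcon] at hu'
      linarith
    have : c.val = (c'.val + 1) % n := congrArg (fun x => Sum.elim Fin.val Fin.val x) hc2
    exact no_two_cycle (show 3 ≤ n by omega) c.isLt rfl this

lemma maximin_sw (hn : 4 ≤ n) (heven : Even n)
    (πf : (Fin n ⊕ Fin n) ≃ (Fin n ⊕ Fin n)) (hm : maximin (seat6 n) (prefs6 n) πf) :
    sw (seat6 n) (prefs6 n) πf = 2 * n := by
  choose g hg using maximin_matching_K hn heven πf hm
  have ginj : Function.Injective g := by
    intro v w hvw
    have : πf.symm (.inr v) = πf.symm (.inr w) := by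
      rw [hg v, hg w, hvw]
    have := πf.symm.injective this
    exact Sum.inr.inj this
  have gsurj : Function.Surjective g := Finite.injective_iff_surjective.mp ginj
  have h3 : ∀ a : Fin n, ∃ v : Fin n, πf (.inl a) = .inr v := by
    intro a
    obtain ⟨v, hv⟩ := gsurj a
    exact ⟨v, by rw [← hv, ← hg v, Equiv.apply_symm_apply]⟩
  have hval : ∀ p, utility (seat6 n) (prefs6 n) πf p = 1 := by
    intro p
    refine le_antisymm ?_ (maximin_utils_ge_one hn heven πf hm p)
    cases p with
    | inl a =>
      obtain ⟨v, hv⟩ := h3 a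
      have hlt : pt v.val < n := pt_lt heven v.isLt
      rw [utility_matching πf _ v hv hlt, hg ⟨pt v.val, hlt⟩]
      simp only [prefs6]
      split_ifs <;> norm_num
    | inr c => exact c_util_le_one (by omega) πf c
  rw [sw, Finset.sum_congr rfl (fun p _ => hval p)]
  simp only [Finset.sum_const, Finset.card_univ, Fintype.card_sum, Fintype.card_fin,
    nsmul_eq_mul, mul_one]
  push_cast
  ring

end Lemmas3

section Lemmas4

variable {n : ℕ}

lemma sum_even_indicator (m : ℕ) :
    ∑ i ∈ Finset.range (2 * m), (if i % 2 = 0 then (1:ℝ) else 0) = m := by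
  induction m with
  | zero => simp
  | succ k ih =>
    have h2 : 2 * (k + 1) = (2 * k) + 1 + 1 := by ring
    rw [h2, Finset.sum_range_succ, Finset.sum_range_succ, ih,
      if_pos (by omega : (2 * k) % 2 = 0), if_neg (by omega : ¬ (2 * k + 1) % 2 = 0)]
    push_cast
    ring

lemma sum_ite_ne (g : Fin n → ℝ) (a : Fin n) :
    ∑ w : Fin n, (if a ≠ w then g w else 0) = (∑ w : Fin n, g w) - g a := by
  have key : ∀ w : Fin n, (if a ≠ w then g w else 0) = g w - (if w = a then g w else 0) := by
    intro w
    by_cases h : w = a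
    · rw [if_neg (by simp [h]), if_pos h, h]; ring
    · rw [if_pos (Ne.symm h), if_neg h]; ring
  rw [Finset.sum_congr rfl (fun w _ => key w), Finset.sum_sub_distrib]
  simp

lemma sw_refl (hn : 4 ≤ n) (heven : Even n) :
    sw (seat6 n) (prefs6 n) (Equiv.refl (Fin n ⊕ Fin n)) = n * ((n:ℝ) - 1/2) := by
  rw [sw, Fintype.sum_sum_type]
  have hK : ∀ a : Fin n,
      utility (seat6 n) (prefs6 n) (Equiv.refl _) (.inl a) = (n:ℝ) - 1 := by
    intro a
    rw [utility_clique _ (.inl a) a rfl]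
    have key : ∀ w : Fin n,
        (if a ≠ w then prefs6 n (.inl a) ((Equiv.refl (Fin n ⊕ Fin n)).symm (.inl w)) else 0)
        = if a ≠ w then (1:ℝ) else 0 := by
      intro w
      by_cases h : a ≠ w
      · rw [if_pos h, if_pos h]
        simp only [Equiv.refl_symm, Equiv.refl_apply, prefs6]
        exact if_pos h
      · rw [if_neg h, if_neg h]
    rw [Finset.sum_congr rfl (fun w _ => key w), sum_ite_ne (fun _ => (1:ℝ)) a]
    simp
  have hC : ∀ c : Fin n,
      utility (seat6 n) (prefs6 n) (Equiv.refl _) (.inr c)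
        = if c.val % 2 = 0 then (1:ℝ) else 0 := by
    intro c
    have hlt : pt c.val < n := pt_lt heven c.isLt
    rw [utility_matching _ (.inr c) c rfl hlt]
    simp only [Equiv.refl_symm, Equiv.refl_apply, prefs6]
    obtain ⟨m, hme⟩ := heven
    by_cases h : c.val % 2 = 0
    · rw [if_pos h, if_pos]
      show pt c.val = (c.val + 1) % n
      rw [pt, if_pos h, Nat.mod_eq_of_lt (by omega)]
    · rw [if_neg h, if_neg]
      show ¬ pt c.val = (c.val + 1) % n
      rw [pt, if_neg h]
      by_cases h2 : c.val + 1 = n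
      · rw [h2, Nat.mod_self]; omega
      · rw [Nat.mod_eq_of_lt (by omega)]; omega
  rw [Finset.sum_congr rfl (fun a _ => hK a), Finset.sum_congr rfl (fun c _ => hC c)]
  obtain ⟨m, hme⟩ := heven
  have : ∑ c : Fin n, (if c.val % 2 = 0 then (1:ℝ) else 0) = m := by
    rw [Fin.sum_univ_eq_sum_range (fun i => if i % 2 = 0 then (1:ℝ) else 0) n,
      (by omega : n = 2 * m)]
    exact sum_even_indicator m
  rw [this]
  simp only [Finset.sum_const, Finset.card_univ, Fintype.card_fin, nsmul_eq_mul]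
  have hm : (m:ℝ) = n / 2 := by
    have : (n:ℝ) = m + m := by exact_mod_cast congrArg Nat.cast hme
    linarith
  rw [hm]
  ring

end Lemmas4

section Lemmas5

variable {n : ℕ}

lemma sw_le (hn : 4 ≤ n) (heven : Even n) (π : (Fin n ⊕ Fin n) ≃ (Fin n ⊕ Fin n)) :
    sw (seat6 n) (prefs6 n) π ≤ n * ((n:ℝ) - 1/2) := by
  classical
  set kk : Fin n ⊕ Fin n → ℝ := Sum.elim (fun _ => 1) (fun _ => 0) with hkk
  have hsw : sw (seat6 n) (prefs6 n) π
      = ∑ a : Fin n, utility (seat6 n) (prefs6 n) π (π.symm (.inl a))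
        + ∑ v : Fin n, utility (seat6 n) (prefs6 n) π (π.symm (.inr v)) := by
    rw [sw, ← Equiv.sum_comp π.symm (utility (seat6 n) (prefs6 n) π), Fintype.sum_sum_type]
  set k : ℝ := ∑ a : Fin n, kk (π.symm (.inl a)) with hk
  have kk01 : ∀ p, kk p = 0 ∨ kk p = 1 := by rintro (a|c) <;> simp [hkk]
  have hmk : ∑ v : Fin n, kk (π.symm (.inr v)) = (n:ℝ) - k := by
    have htot : ∑ s : Fin n ⊕ Fin n, kk (π.symm s) = (n:ℝ) := by
      rw [Equiv.sum_comp π.symm kk, Fintype.sum_sum_type]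
      simp [hkk]
    rw [Fintype.sum_sum_type, ← hk] at htot
    linarith
  have hk0 : 0 ≤ k := Finset.sum_nonneg fun a _ => by
    rcases kk01 (π.symm (.inl a)) with h|h <;> rw [h] <;> norm_num
  have hkn : k ≤ (n:ℝ) := by
    have h0 : (0:ℝ) ≤ ∑ v : Fin n, kk (π.symm (.inr v)) := Finset.sum_nonneg fun v _ => by
      rcases kk01 (π.symm (.inr v)) with h|h <;> rw [h] <;> norm_num
    linarith
  -- clique part
  have hclique : ∑ a : Fin n, utility (seat6 n) (prefs6 n) π (π.symm (.inl a))
      ≤ k * (k - 1) + ((n:ℝ) - k) := by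
    have hb : ∀ a : Fin n, utility (seat6 n) (prefs6 n) π (π.symm (.inl a))
        ≤ kk (π.symm (.inl a)) * (k - 1) + (1 - kk (π.symm (.inl a))) := by
      intro a
      cases h : π.symm (.inl a) with
      | inr c =>
        have h1 : utility (seat6 n) (prefs6 n) π (.inr c) ≤ 1 := c_util_le_one (by omega) π c
        simp only [hkk, Sum.elim_inr]
        linarith
      | inl b =>
        have hseat : π (.inl b) = .inl a := by rw [← h, Equiv.apply_symm_apply]
        rw [utility_clique π _ a hseat]
        have step : ∀ w : Fin n, (if a ≠ w then prefs6 n (.inl b) (π.symm (.inl w)) else 0)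
            ≤ (if a ≠ w then kk (π.symm (.inl w)) else 0) := by
          intro w
          by_cases hw : a ≠ w
          · rw [if_pos hw, if_pos hw]
            cases hq : π.symm (.inl w) with
            | inl d =>
              simp only [prefs6, hkk, Sum.elim_inl]
              split_ifs <;> norm_num
            | inr d =>
              simp only [prefs6, hkk, Sum.elim_inr]
              norm_num
          · rw [if_neg hw, if_neg hw]
        calc ∑ w : Fin n, (if a ≠ w then prefs6 n (.inl b) (π.symm (.inl w)) else 0)
            ≤ ∑ w : Fin n, (if a ≠ w then kk (π.symm (.inl w)) else 0) :=
              Finset.sum_le_sum (fun w _ => step w)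
          _ = k - kk (π.symm (.inl a)) := by
              rw [sum_ite_ne (fun w => kk (π.symm (.inl w))) a, ← hk]
          _ = k - 1 := by rw [h]; simp [hkk]
          _ ≤ kk (Sum.inl b : Fin n ⊕ Fin n) * (k - 1) + (1 - kk (Sum.inl b : Fin n ⊕ Fin n)) := by
              simp [hkk]
    have hsum : ∑ a : Fin n, (kk (π.symm (.inl a)) * (k - 1) + (1 - kk (π.symm (.inl a))))
        = k * (k - 1) + ((n:ℝ) - k) := by
      rw [Finset.sum_add_distrib, ← Finset.sum_mul, ← hk, Finset.sum_sub_distrib,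
        Finset.sum_const, Finset.card_univ, Fintype.card_fin, nsmul_eq_mul, mul_one, ← hk]
    calc ∑ a : Fin n, utility (seat6 n) (prefs6 n) π (π.symm (.inl a))
        ≤ ∑ a : Fin n, (kk (π.symm (.inl a)) * (k - 1) + (1 - kk (π.symm (.inl a)))) :=
          Finset.sum_le_sum (fun a _ => hb a)
      _ = k * (k - 1) + ((n:ℝ) - k) := hsum
  -- matching part
  have hinv : ∀ v : Fin n, pt (pt v.val) = v.val := fun v => pt_pt v.val
  let pe : Equiv.Perm (Fin n) :=
    ⟨fun v => ⟨pt v.val, pt_lt heven v.isLt⟩, fun v => ⟨pt v.val, pt_lt heven v.isLt⟩,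
      fun v => Fin.ext (pt_pt v.val), fun v => Fin.ext (pt_pt v.val)⟩
  have pe_apply : ∀ v : Fin n, pe v = ⟨pt v.val, pt_lt heven v.isLt⟩ := fun v => rfl
  have hpair : ∀ v : Fin n,
      utility (seat6 n) (prefs6 n) π (π.symm (.inr v))
        + utility (seat6 n) (prefs6 n) π (π.symm (.inr (pe v)))
      ≤ (kk (π.symm (.inr v)) + kk (π.symm (.inr (pe v))))
        + ((1 - kk (π.symm (.inr v))) / 2 + (1 - kk (π.symm (.inr (pe v)))) / 2) := by
    intro v
    have hlt : pt v.val < n := pt_lt heven v.isLt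
    have h1 : utility (seat6 n) (prefs6 n) π (π.symm (.inr v))
        = prefs6 n (π.symm (.inr v)) (π.symm (.inr (pe v))) := by
      have := utility_matching π (π.symm (.inr v)) v (Equiv.apply_symm_apply π _) hlt
      rw [this]
      rfl
    have hlt2 : pt (pe v).val < n := pt_lt heven (pe v).isLt
    have hvv : (⟨pt (pe v).val, hlt2⟩ : Fin n) = v := Fin.ext (pt_pt v.val)
    have h2 : utility (seat6 n) (prefs6 n) π (π.symm (.inr (pe v)))
        = prefs6 n (π.symm (.inr (pe v))) (π.symm (.inr v)) := by
      have := utility_matching π (π.symm (.inr (pe v))) (pe v) (Equiv.apply_symm_apply π _) hlt2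
      rw [this, hvv]
    rw [h1, h2]
    cases hp : π.symm (.inr v) with
    | inl b =>
      cases hq : π.symm (.inr (pe v)) with
      | inl b' =>
        simp only [prefs6, hkk, Sum.elim_inl]
        split_ifs <;> norm_num
      | inr c' =>
        simp only [prefs6, hkk, Sum.elim_inl, Sum.elim_inr]
        norm_num
    | inr c =>
      cases hq : π.symm (.inr (pe v)) with
      | inl b' =>
        simp only [prefs6, hkk, Sum.elim_inl, Sum.elim_inr]
        norm_num
      | inr c' =>
        simp only [prefs6, hkk, Sum.elim_inr]
        split_ifs with hx hy hy
        · exact (no_two_cycle (show 3 ≤ n by omega) c.isLt hx hy).elim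
        all_goals norm_num
  have hmatch : ∑ v : Fin n, utility (seat6 n) (prefs6 n) π (π.symm (.inr v))
      ≤ ((n:ℝ) - k) + k / 2 := by
    have e1 : ∑ v : Fin n, kk (π.symm (.inr (pe v))) = (n:ℝ) - k := by
      rw [Equiv.sum_comp pe (fun v => kk (π.symm (.inr v)))]
      exact hmk
    have e2 : ∑ v : Fin n, (1 - kk (π.symm (.inr v))) / 2 = k / 2 := by
      rw [← Finset.sum_div, Finset.sum_sub_distrib, Finset.sum_const, Finset.card_univ,
        Fintype.card_fin, nsmul_eq_mul, mul_one, hmk]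
      ring
    have e3 : ∑ v : Fin n, (1 - kk (π.symm (.inr (pe v)))) / 2 = k / 2 := by
      rw [Equiv.sum_comp pe (fun v => (1 - kk (π.symm (.inr v))) / 2)]
      exact e2
    have lhs_eq : ∑ v : Fin n, (utility (seat6 n) (prefs6 n) π (π.symm (.inr v))
          + utility (seat6 n) (prefs6 n) π (π.symm (.inr (pe v))))
        = (∑ v : Fin n, utility (seat6 n) (prefs6 n) π (π.symm (.inr v)))
          + (∑ v : Fin n, utility (seat6 n) (prefs6 n) π (π.symm (.inr v))) := by
      rw [Finset.sum_add_distrib,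
        Equiv.sum_comp pe (fun v => utility (seat6 n) (prefs6 n) π (π.symm (.inr v)))]
    have rhs_eq : ∑ v : Fin n, ((kk (π.symm (.inr v)) + kk (π.symm (.inr (pe v))))
          + ((1 - kk (π.symm (.inr v))) / 2 + (1 - kk (π.symm (.inr (pe v)))) / 2))
        = (((n:ℝ) - k) + ((n:ℝ) - k)) + (k / 2 + k / 2) := by
      rw [Finset.sum_add_distrib, Finset.sum_add_distrib, Finset.sum_add_distrib,
        hmk, e1, e2, e3]
    have big := Finset.sum_le_sum (s := (Finset.univ : Finset (Fin n)))
      (fun v (_ : v ∈ Finset.univ) => hpair v)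
    rw [lhs_eq, rhs_eq] at big
    linarith
  rw [hsw]
  have hn4 : (4:ℝ) ≤ (n:ℝ) := by exact_mod_cast hn
  nlinarith [mul_nonneg (sub_nonneg.mpr hkn) (show (0:ℝ) ≤ (n:ℝ) + k - 5/2 by linarith)]

end Lemmas5
/-- for every even `n ≥ 4`, in the above binary instance, whose seat graph has
average degree `d̃(G) = n/2`, every maximin arrangement has social welfare `2n`, the maximum
social welfare equals `n(n − 1/2)`, and hence the price of fairness is at least
`d̃(G) − 1/4 = n/2 − 1/4`. -/
theorem pof_lower_bound_binary (n : ℕ) (hn : 4 ≤ n) (heven : Even n) :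
    (∀ p q : Fin n ⊕ Fin n, p ≠ q → prefs6 n p q = 0 ∨ prefs6 n p q = 1) ∧
    (∀ πf : (Fin n ⊕ Fin n) ≃ (Fin n ⊕ Fin n), maximin (seat6 n) (prefs6 n) πf →
      sw (seat6 n) (prefs6 n) πf = 2 * n) ∧
    (∃ πm : (Fin n ⊕ Fin n) ≃ (Fin n ⊕ Fin n), maximum (seat6 n) (prefs6 n) πm ∧
      sw (seat6 n) (prefs6 n) πm = n * ((n : ℝ) - 1/2)) ∧
    (∀ πf πm : (Fin n ⊕ Fin n) ≃ (Fin n ⊕ Fin n),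
      maximin (seat6 n) (prefs6 n) πf → maximum (seat6 n) (prefs6 n) πm →
      ((n : ℝ)/2 - 1/4) * sw (seat6 n) (prefs6 n) πf ≤ sw (seat6 n) (prefs6 n) πm) := by
  refine ⟨?_, ?_, ?_, ?_⟩
  · rintro (a|a) (b|b) hpq
    · simp only [prefs6]; split_ifs <;> simp
    · left; simp [prefs6]
    · left; simp [prefs6]
    · simp only [prefs6]; split_ifs <;> simp
  · exact fun πf hf => maximin_sw hn heven πf hf
  · exact ⟨Equiv.refl _,
      fun π => by rw [sw_refl hn heven]; exact sw_le hn heven π,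
      sw_refl hn heven⟩
  · intro πf πm hf hmax
    rw [maximin_sw hn heven πf hf]
    have h1 := hmax (Equiv.refl _)
    rw [sw_refl hn heven] at h1
    have h2 : ((n:ℝ)/2 - 1/4) * (2 * (n:ℝ)) = (n:ℝ) * ((n:ℝ) - 1/2) := by ring
    linarith
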